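/- For pure-state channels S_x = |ψ_x⟩⟨ψ_x|, the sphere packing exponent satisfies E_sp^cc(R∞(P), P) ≤ R∞(P), where E_sp^cc(R,P) = sup_{ρ≥0}[E₀^cc(ρ,P) − ρR], E₀^cc(ρ,P) = min_F [−(1+ρ) Σ_x P(x) log Tr(S_x F^{ρ/(1+ρ)})], and R∞(P) = min_F [−Σ_x P(x) log Tr(S_x F)]. -/

import Mathlib

open Matrix
open scoped ComplexOrder

noncomputable def mpow {d : ℕ} (A : Matrix (Fin d) (Fin d) ℂ) (t : ℝ) : Matrix (Fin d) (Fin d) ℂ :=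
  cfc (fun x : ℝ => x ^ t) A

noncomputable def IsDensity {d : ℕ} (A : Matrix (Fin d) (Fin d) ℂ) : Prop :=
  A.PosSemidef ∧ A.trace = 1

def IsProb {Z : Type*} [Fintype Z] (P : Z → ℝ) : Prop :=
  (∀ z, 0 ≤ P z) ∧ ∑ z, P z = 1

/-! For a density matrix `F` and a unit vector `ψ`, `⟨ψ, f(F) ψ⟩` is the average of `f` over the
eigenvalues of `F`, weighted by the squared moduli of the coordinates of `ψ` in an eigenbasis.
The eigenvalues lie in `[0, 1]`, where `t ≤ t ^ s ≤ 1` for `s ∈ [0, 1]`; hence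
`Tr(S_x F) ≤ Tr(S_x F ^ s) ≤ 1`, so at every `F` the objective of `E₀^cc(ρ, P)` is nonnegative
and at most `1 + ρ` times that of `R∞(P)`. Thus `E₀^cc(ρ, P) ≤ (1 + ρ) R∞(P)` for all `ρ ≥ 0`. -/

open Finset

namespace Matrix

variable {𝕜 : Type*} [RCLike 𝕜] {n : Type*} [Fintype n]

lemma trace_vecMulVec_star_mul (v : n → 𝕜) (M : Matrix n n 𝕜) :
    (vecMulVec v (star v) * M).trace = star v ⬝ᵥ (M *ᵥ v) := by
  rw [vecMulVec_mul, trace_vecMulVec, dotProduct_comm, dotProduct_mulVec]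

lemma IsHermitian.star_dotProduct_cfc_mulVec [DecidableEq n] {A : Matrix n n 𝕜}
    (hA : A.IsHermitian) (f : ℝ → ℝ) (v : n → 𝕜) :
    star v ⬝ᵥ (cfc f A *ᵥ v) = ∑ k, ((f (hA.eigenvalues k) *
      ‖(star (hA.eigenvectorUnitary : Matrix n n 𝕜) *ᵥ v) k‖ ^ 2 : ℝ) : 𝕜) := by
  have hU : star v ᵥ* (hA.eigenvectorUnitary : Matrix n n 𝕜) =
      star (star (hA.eigenvectorUnitary : Matrix n n 𝕜) *ᵥ v) := by
    rw [star_mulVec, star_eq_conjTranspose, conjTranspose_conjTranspose]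
  rw [hA.cfc_eq, IsHermitian.cfc, Unitary.conjStarAlgAut_apply, ← mulVec_mulVec, ← mulVec_mulVec,
    dotProduct_mulVec, hU]
  simp only [dotProduct, mulVec_diagonal, Pi.star_apply, RCLike.star_def, Function.comp_apply]
  refine sum_congr rfl fun k _ => ?_
  rw [RCLike.ofReal_mul, RCLike.ofReal_pow, ← RCLike.conj_mul]
  ring

lemma PosSemidef.exists_spectral_weights [DecidableEq n] {A : Matrix n n 𝕜} (hA : A.PosSemidef)
    (htr : A.trace = 1) {v : n → 𝕜} (hv : ∑ i, ‖v i‖ ^ 2 = 1) :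
    ∃ μ m : n → ℝ, (∀ k, 0 ≤ μ k) ∧ (∀ k, μ k ≤ 1) ∧ (∀ k, 0 ≤ m k) ∧ ∑ k, m k = 1 ∧
      ∀ f : ℝ → ℝ, RCLike.re (vecMulVec v (star v) * cfc f A).trace = ∑ k, f (μ k) * m k := by
  have hexp := hA.isHermitian.star_dotProduct_cfc_mulVec
  refine ⟨hA.isHermitian.eigenvalues,
    fun k => ‖(star (hA.isHermitian.eigenvectorUnitary : Matrix n n 𝕜) *ᵥ v) k‖ ^ 2,
    hA.eigenvalues_nonneg, fun k => ?_, fun k => by positivity, ?_, fun f => ?_⟩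
  · have hsum : ∑ j, hA.isHermitian.eigenvalues j = 1 := by
      rw [hA.isHermitian.trace_eq_sum_eigenvalues] at htr
      exact_mod_cast htr
    exact hsum ▸ single_le_sum (fun j _ => hA.eigenvalues_nonneg j) (mem_univ k)
  · have hnormSq := hexp (fun _ => 1) v
    rw [cfc_const_one ℝ A hA.isHermitian.isSelfAdjoint, one_mulVec] at hnormSq
    simp only [one_mul, dotProduct, Pi.star_apply, RCLike.star_def, RCLike.conj_mul] at hnormSq
    rw [← hv]
    exact_mod_cast hnormSq.symm
  · rw [trace_vecMulVec_star_mul, hexp, ← RCLike.ofReal_sum, RCLike.ofReal_re]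

end Matrix

section SpectralAverages

variable {ι : Type*} [Fintype ι] {μ m : ι → ℝ} {s : ℝ}

lemma Real.log_sum_rpow_mul_nonpos (hμ : ∀ k, 0 ≤ μ k) (hμ1 : ∀ k, μ k ≤ 1) (hm : ∀ k, 0 ≤ m k)
    (hm1 : ∑ k, m k = 1) (hs : 0 ≤ s) : Real.log (∑ k, μ k ^ s * m k) ≤ 0 := by
  refine Real.log_nonpos (sum_nonneg fun k _ => mul_nonneg (Real.rpow_nonneg (hμ k) s) (hm k)) ?_
  calc ∑ k, μ k ^ s * m k ≤ ∑ k, m k :=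
        sum_le_sum fun k _ => mul_le_of_le_one_left (hm k) (Real.rpow_le_one (hμ k) (hμ1 k) hs)
    _ = 1 := hm1

-- Since `Real.log 0 = 0`, the case `∑ k, μ k * m k = 0` needs care: then `∑ k, μ k ^ s * m k` is
-- `0` when `0 < s` and `1` when `s = 0`.
lemma Real.log_sum_mul_le_log_sum_rpow_mul (hμ : ∀ k, 0 ≤ μ k) (hμ1 : ∀ k, μ k ≤ 1)
    (hm : ∀ k, 0 ≤ m k) (hm1 : ∑ k, m k = 1) (hs0 : 0 ≤ s) (hs1 : s ≤ 1) :
    Real.log (∑ k, μ k * m k) ≤ Real.log (∑ k, μ k ^ s * m k) := by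
  have ha : 0 ≤ ∑ k, μ k * m k := sum_nonneg fun k _ => mul_nonneg (hμ k) (hm k)
  rcases hs0.eq_or_lt with rfl | hs
  · simp only [Real.rpow_zero, one_mul, hm1, Real.log_one]
    refine Real.log_nonpos ha (hm1 ▸ sum_le_sum fun k _ => mul_le_of_le_one_left (hm k) (hμ1 k))
  rcases ha.eq_or_lt with ha | ha
  · have hzero := (sum_eq_zero_iff_of_nonneg fun k _ => mul_nonneg (hμ k) (hm k)).1 ha.symm
    have hb : ∑ k, μ k ^ s * m k = 0 := sum_eq_zero fun k hk => by
      rcases mul_eq_zero.1 (hzero k hk) with h | h <;> simp [h, Real.zero_rpow hs.ne']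
    rw [← ha, hb]
  · exact Real.log_le_log ha <| sum_le_sum fun k _ => mul_le_mul_of_nonneg_right
      (Real.self_le_rpow_of_le_one (hμ k) (hμ1 k) hs1) (hm k)

end SpectralAverages

section PureStates

variable {d : ℕ} {F : Matrix (Fin d) (Fin d) ℂ} {ψ : Fin d → ℂ} {s : ℝ}

lemma IsDensity.log_re_trace_mul_mpow_nonpos (hF : IsDensity F) (hψ : ∑ i, ‖ψ i‖ ^ 2 = 1)
    (hs : 0 ≤ s) : Real.log (vecMulVec ψ (star ψ) * mpow F s).trace.re ≤ 0 := by
  obtain ⟨μ, m, hμ, hμ1, hm, hm1, hexp⟩ := hF.1.exists_spectral_weights hF.2 hψ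
  rw [mpow, ← RCLike.re_to_complex, hexp]
  exact Real.log_sum_rpow_mul_nonpos hμ hμ1 hm hm1 hs

lemma IsDensity.log_re_trace_mul_le_log_re_trace_mul_mpow (hF : IsDensity F)
    (hψ : ∑ i, ‖ψ i‖ ^ 2 = 1) (hs0 : 0 ≤ s) (hs1 : s ≤ 1) :
    Real.log (vecMulVec ψ (star ψ) * F).trace.re ≤
      Real.log (vecMulVec ψ (star ψ) * mpow F s).trace.re := by
  obtain ⟨μ, m, hμ, hμ1, hm, hm1, hexp⟩ := hF.1.exists_spectral_weights hF.2 hψ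
  have hid := hexp id
  rw [cfc_id ℝ F hF.1.isHermitian.isSelfAdjoint] at hid
  rw [mpow, ← RCLike.re_to_complex, ← RCLike.re_to_complex, hid, hexp]
  exact Real.log_sum_mul_le_log_sum_rpow_mul hμ hμ1 hm hm1 hs0 hs1

end PureStates

theorem Espcc_at_Rinfty_le_Rinfty_general {X : Type*} [Fintype X]
    {d : ℕ}
    (ψ : X → Fin d → ℂ) (hψ : ∀ x, ∑ i, Complex.normSq (ψ x i) = 1)
    (S : X → Matrix (Fin d) (Fin d) ℂ)
    (hS : ∀ x, S x = vecMulVec (ψ x) (fun i => star (ψ x i)))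
    (P : X → ℝ) (hP : IsProb P)
    (E0cc : ℝ → ℝ)
    (hE0cc : ∀ ρ : ℝ, E0cc ρ =
      ⨅ F : {F : Matrix (Fin d) (Fin d) ℂ // IsDensity F},
        -(1 + ρ) * ∑ x, P x * Real.log (((S x * mpow F.1 (ρ / (1 + ρ)))).trace.re))
    (Rinf : ℝ)
    (hRinf : Rinf =
      ⨅ F : {F : Matrix (Fin d) (Fin d) ℂ // IsDensity F},
        -∑ x, P x * Real.log ((S x * F.1).trace.re)) :
    (⨆ ρ : {ρ : ℝ // 0 ≤ ρ}, (E0cc ρ.1 - ρ.1 * Rinf)) ≤ Rinf := by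
  obtain rfl : S = fun x => vecMulVec (ψ x) (star (ψ x)) := funext hS
  replace hψ : ∀ x, ∑ i, ‖ψ x i‖ ^ 2 = 1 := by simpa only [Complex.normSq_eq_norm_sq] using hψ
  refine ciSup_le fun ⟨ρ, hρ⟩ => ?_
  have hs0 : 0 ≤ ρ / (1 + ρ) := by positivity
  have hs1 : ρ / (1 + ρ) ≤ 1 := div_le_one_of_le₀ (by linarith) (by linarith)
  have hE : E0cc ρ ≤ (1 + ρ) * Rinf := by
    rw [hE0cc, hRinf, Real.mul_iInf_of_nonneg (by linarith)]
    refine ciInf_mono ⟨0, ?_⟩ fun F => ?_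
    · rintro _ ⟨F, rfl⟩
      have := sum_nonpos (s := univ) fun x _ => mul_nonpos_of_nonneg_of_nonpos (hP.1 x)
        (F.2.log_re_trace_mul_mpow_nonpos (hψ x) hs0)
      nlinarith
    · have := sum_le_sum (s := univ) fun x _ => mul_le_mul_of_nonneg_left
        (F.2.log_re_trace_mul_le_log_re_trace_mul_mpow (hψ x) hs0 hs1) (hP.1 x)
      nlinarith
  dsimp only
  linarith

/-- for a pure-state channel `S_x = |ψ_x⟩⟨ψ_x|`, the constant
composition sphere packing exponent satisfies `E_sp^cc(R∞(P), P) ≤ R∞(P)`, where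
`E_sp^cc(R,P) = sup_{ρ≥0}[E₀^cc(ρ,P) − ρR]`,
`E₀^cc(ρ,P) = min_F [−(1+ρ) Σ_x P(x) log Tr(S_x F^{ρ/(1+ρ)})]` and
`R∞(P) = min_F [−Σ_x P(x) log Tr(S_x F)]`. -/
theorem Espcc_at_Rinfty_le_Rinfty {X : Type*} [Fintype X] [Nonempty X]
    {d : ℕ} (hd : 0 < d)
    (ψ : X → Fin d → ℂ) (hψ : ∀ x, ∑ i, Complex.normSq (ψ x i) = 1)
    (S : X → Matrix (Fin d) (Fin d) ℂ)
    (hS : ∀ x, S x = vecMulVec (ψ x) (fun i => star (ψ x i)))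
    (P : X → ℝ) (hP : IsProb P)
    (E0cc : ℝ → ℝ)
    (hE0cc : ∀ ρ : ℝ, E0cc ρ =
      ⨅ F : {F : Matrix (Fin d) (Fin d) ℂ // IsDensity F},
        -(1 + ρ) * ∑ x, P x * Real.log (((S x * mpow F.1 (ρ / (1 + ρ)))).trace.re))
    (Rinf : ℝ)
    (hRinf : Rinf =
      ⨅ F : {F : Matrix (Fin d) (Fin d) ℂ // IsDensity F},
        -∑ x, P x * Real.log ((S x * F.1).trace.re)) :
    (⨆ ρ : {ρ : ℝ // 0 ≤ ρ}, (E0cc ρ.1 - ρ.1 * Rinf)) ≤ Rinf :=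
  Espcc_at_Rinfty_le_Rinfty_general ψ hψ S hS P hP E0cc hE0cc Rinf hRinf
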